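/- arXiv:2306.01758 — 2 statements merged into one kernel-verified Lean document; each statement's English description precedes it below -/
import Mathlib

section
/- For each a ∈ ℝ^∞, the translation map τ_a on complex measures of ℝ^∞, defined by (τ_a T)(E) := T({x : x + a ∈ E}), is a unitary operator on the Hilbert space CM(ℝ^∞). -/
open MeasureTheory Complex Filter Topology

noncomputable def sqDen {Ω : Type*} [MeasurableSpace Ω] (μ : Measure Ω) (f : Ω → ℂ) :
    ComplexMeasure Ω :=
  μ.withDensityᵥ (fun x => f x * ((‖f x‖ : ℝ) : ℂ))

structure CMSpace (Ω : Type*) [MeasurableSpace Ω] where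
  add : ComplexMeasure Ω → ComplexMeasure Ω → ComplexMeasure Ω
  smul : ℂ → ComplexMeasure Ω → ComplexMeasure Ω
  inner : ComplexMeasure Ω → ComplexMeasure Ω → ℂ
  add_repr : ∀ (μ : Measure Ω), SigmaFinite μ → ∀ f g : Ω → ℂ,
      MemLp f 2 μ → MemLp g 2 μ →
      add (sqDen μ f) (sqDen μ g) = sqDen μ (f + g)
  smul_repr : ∀ (μ : Measure Ω), SigmaFinite μ → ∀ (c : ℂ) (f : Ω → ℂ),
      MemLp f 2 μ → smul c (sqDen μ f) = sqDen μ (c • f)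
  inner_repr : ∀ (μ : Measure Ω), SigmaFinite μ → ∀ f g : Ω → ℂ,
      MemLp f 2 μ → MemLp g 2 μ →
      inner (sqDen μ f) (sqDen μ g) = ∫ x, f x * (starRingEnd ℂ) (g x) ∂μ
  add_assoc : ∀ u v w, add (add u v) w = add u (add v w)
  add_comm : ∀ u v, add u v = add v u
  add_zero : ∀ u, add u 0 = u
  neg_add : ∀ u, add (smul (-1) u) u = 0
  one_smul : ∀ u, smul 1 u = u
  mul_smul : ∀ c d u, smul (c * d) u = smul c (smul d u)
  smul_add : ∀ c u v, smul c (add u v) = add (smul c u) (smul c v)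
  add_smul : ∀ c d u, smul (c + d) u = add (smul c u) (smul d u)
  inner_conj_symm : ∀ u v, (starRingEnd ℂ) (inner u v) = inner v u
  inner_add_left : ∀ u v w, inner (add u v) w = inner u w + inner v w
  inner_smul_left : ∀ c u v, inner (smul c u) v = (starRingEnd ℂ) c * inner u v
  inner_self_nonneg : ∀ u, 0 ≤ (inner u u).re ∧ (inner u u).im = 0
  inner_self_eq_zero : ∀ u, inner u u = 0 → u = 0
  complete : ∀ u : ℕ → ComplexMeasure Ω,
    (∀ ε > 0, ∃ N, ∀ m ≥ N, ∀ n ≥ N,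
      Real.sqrt (inner (add (u m) (smul (-1) (u n))) (add (u m) (smul (-1) (u n)))).re < ε) →
    ∃ v, Tendsto
      (fun n => Real.sqrt (inner (add (u n) (smul (-1) v)) (add (u n) (smul (-1) v))).re)
      atTop (nhds 0)

noncomputable def CMSpace.nrm {Ω : Type*} [MeasurableSpace Ω] (C : CMSpace Ω)
    (u : ComplexMeasure Ω) : ℝ := Real.sqrt (C.inner u u).re

noncomputable def CMSpace.sub {Ω : Type*} [MeasurableSpace Ω] (C : CMSpace Ω)
    (u v : ComplexMeasure Ω) : ComplexMeasure Ω := C.add u (C.smul (-1) v)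


/-- Translation of a complex measure on ℝ^∞: (τ_a T)(E) = T {x | x + a ∈ E}. -/
noncomputable def cmTranslate (a : ℕ → ℝ) (T : ComplexMeasure (ℕ → ℝ)) :
    ComplexMeasure (ℕ → ℝ) :=
  T.map (fun x => x + a)

/-!
Any two complex measures are `sqDen μ f` and `sqDen μ g` for one finite measure `μ` (the sum of
the total variations of their real and imaginary parts) and some `f g ∈ L²(μ)`: take
`f = polarSqrt ∘ (du/dμ)`. Pushing forward along a measurable automorphism `e` sends `sqDen μ f`
to `sqDen (e_* μ) (f ∘ e⁻¹)`, and `f ↦ f ∘ e⁻¹` is a linear isometry `L²(μ) → L²(e_* μ)`.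
Since the operations of a `CMSpace` are computed through any such representation, the pushforward
commutes with them. Translation by `a` is such an automorphism.
-/

namespace MeasureTheory

namespace VectorMeasure

variable {α β γ M : Type*} [MeasurableSpace α] [MeasurableSpace β] [MeasurableSpace γ]
  [AddCommMonoid M] [TopologicalSpace M]

theorem map_map (v : VectorMeasure α M) {f : α → β} {g : β → γ} (hf : Measurable f)
    (hg : Measurable g) : (v.map f).map g = v.map (g ∘ f) := by
  ext s hs
  rw [map_apply _ hg hs, map_apply _ hf (hg hs), map_apply _ (hg.comp hf) hs, Set.preimage_comp]

theorem map_bijective (e : α ≃ᵐ β) : Function.Bijective fun v : VectorMeasure α M => v.map e := by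
  refine Function.bijective_iff_has_inverse.2 ⟨fun v => v.map e.symm, fun v => ?_, fun v => ?_⟩
  · simp [map_map v e.measurable e.symm.measurable]
  · simp [map_map v e.symm.measurable e.measurable]

end VectorMeasure

variable {α β E : Type*} [MeasurableSpace α] [MeasurableSpace β] [NormedAddCommGroup E]

theorem MemLp.comp_symm_map {p : ENNReal} {μ : Measure α} {f : α → E} (hf : MemLp f p μ)
    (e : α ≃ᵐ β) : MemLp (f ∘ e.symm) p (μ.map e) := by
  rw [e.memLp_map_measure_iff]
  simpa [Function.comp_assoc] using hf

variable [NormedSpace ℝ E]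

theorem Measure.withDensityᵥ_map_equiv (μ : Measure α) (e : α ≃ᵐ β) (f : β → E) :
    (μ.withDensityᵥ (f ∘ e)).map e = (μ.map e).withDensityᵥ f := by
  by_cases hf : Integrable f (μ.map e)
  · ext s hs
    rw [VectorMeasure.map_apply _ e.measurable hs,
      withDensityᵥ_apply ((integrable_map_equiv e f).1 hf) (e.measurable hs),
      withDensityᵥ_apply hf hs, setIntegral_map_equiv]
    rfl
  · have hf' : ¬Integrable (f ∘ e) μ := (integrable_map_equiv e f).not.1 hf
    simp only [Measure.withDensityᵥ, hf, hf', dite_false, VectorMeasure.map_zero]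

namespace ComplexMeasure

theorem absolutelyContinuous_of_totalVariation_le (c : ComplexMeasure α)
    {μ : Measure α} (hμ : c.re.totalVariation + c.im.totalVariation ≤ μ) :
    c ≪ᵥ μ.toENNRealVectorMeasure := by
  refine (absolutelyContinuous_ennreal_iff c _).2 ⟨?_, ?_⟩ <;>
    rw [SignedMeasure.absolutelyContinuous_ennreal_iff,
      VectorMeasure.ennrealToMeasure_toENNRealVectorMeasure]
  · exact (Measure.le_add_right le_rfl |>.trans hμ).absolutelyContinuous
  · exact (Measure.le_add_left le_rfl |>.trans hμ).absolutelyContinuous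

theorem withDensityᵥ_rnDeriv_eq (c : ComplexMeasure α) (μ : Measure α) [SigmaFinite μ]
    (hc : c ≪ᵥ μ.toENNRealVectorMeasure) : μ.withDensityᵥ (c.rnDeriv μ) = c := by
  obtain ⟨hre, him⟩ := (absolutelyContinuous_ennreal_iff c _).1 hc
  have hint := c.integrable_rnDeriv μ
  ext s hs
  rw [withDensityᵥ_apply hint hs]
  apply Complex.ext
  · calc (∫ x in s, c.rnDeriv μ x ∂μ).re = ∫ x in s, c.re.rnDeriv μ x ∂μ :=
          (integral_re hint.integrableOn).symm
      _ = μ.withDensityᵥ (c.re.rnDeriv μ) s :=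
          (withDensityᵥ_apply (SignedMeasure.integrable_rnDeriv _ _) hs).symm
      _ = (c s).re := by rw [SignedMeasure.withDensityᵥ_rnDeriv_eq _ _ hre]; rfl
  · calc (∫ x in s, c.rnDeriv μ x ∂μ).im = ∫ x in s, c.im.rnDeriv μ x ∂μ :=
          (integral_im hint.integrableOn).symm
      _ = μ.withDensityᵥ (c.im.rnDeriv μ) s :=
          (withDensityᵥ_apply (SignedMeasure.integrable_rnDeriv _ _) hs).symm
      _ = (c s).im := by rw [SignedMeasure.withDensityᵥ_rnDeriv_eq _ _ him]; rfl

end ComplexMeasure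

end MeasureTheory

namespace Complex

/-- Inverts `w ↦ w * ‖w‖`, the map through which `sqDen` reads its density. -/
noncomputable def polarSqrt (z : ℂ) : ℂ := z / (√‖z‖ : ℂ)

theorem norm_polarSqrt (z : ℂ) : ‖polarSqrt z‖ = √‖z‖ := by
  rw [polarSqrt, norm_div, norm_real, Real.norm_of_nonneg (Real.sqrt_nonneg _),
    Real.div_sqrt]

theorem polarSqrt_mul_norm (z : ℂ) : polarSqrt z * (‖polarSqrt z‖ : ℂ) = z := by
  rcases eq_or_ne z 0 with rfl | hz
  · simp [polarSqrt]
  · rw [norm_polarSqrt, polarSqrt, div_mul_cancel₀]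
    exact_mod_cast (Real.sqrt_pos.2 (norm_pos_iff.2 hz)).ne'

@[fun_prop]
theorem measurable_polarSqrt : Measurable polarSqrt := by
  unfold polarSqrt
  fun_prop

end Complex

section SqDen

variable {α β : Type*} [MeasurableSpace α] [MeasurableSpace β]

theorem sqDen_polarSqrt_comp (μ : Measure α) (h : α → ℂ) :
    sqDen μ (polarSqrt ∘ h) = μ.withDensityᵥ h := by
  simp only [sqDen, Function.comp_apply, polarSqrt_mul_norm]

theorem memLp_two_polarSqrt_comp {μ : Measure α} {h : α → ℂ} (hh : Integrable h μ) :
    MemLp (polarSqrt ∘ h) 2 μ := by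
  refine (memLp_two_iff_integrable_sq_norm
    (measurable_polarSqrt.comp_aemeasurable hh.aemeasurable).aestronglyMeasurable).2 ?_
  simpa [norm_polarSqrt] using hh.norm

theorem exists_memLp_two_sqDen_eq (c : ComplexMeasure α) (μ : Measure α) [SigmaFinite μ]
    (hc : c ≪ᵥ μ.toENNRealVectorMeasure) : ∃ f, MemLp f 2 μ ∧ sqDen μ f = c :=
  ⟨polarSqrt ∘ c.rnDeriv μ, memLp_two_polarSqrt_comp (c.integrable_rnDeriv μ),
    by rw [sqDen_polarSqrt_comp, ComplexMeasure.withDensityᵥ_rnDeriv_eq c μ hc]⟩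

theorem exists_memLp_two_sqDen_eq_pair (u v : ComplexMeasure α) :
    ∃ μ : Measure α, IsFiniteMeasure μ ∧ ∃ f g, MemLp f 2 μ ∧ MemLp g 2 μ ∧
      sqDen μ f = u ∧ sqDen μ g = v := by
  let μ := (u.re.totalVariation + u.im.totalVariation) +
    (v.re.totalVariation + v.im.totalVariation)
  obtain ⟨f, hf, hfu⟩ := exists_memLp_two_sqDen_eq u μ
    (ComplexMeasure.absolutelyContinuous_of_totalVariation_le u (Measure.le_add_right le_rfl))
  obtain ⟨g, hg, hgv⟩ := exists_memLp_two_sqDen_eq v μ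
    (ComplexMeasure.absolutelyContinuous_of_totalVariation_le v (Measure.le_add_left le_rfl))
  exact ⟨μ, inferInstance, f, g, hf, hg, hfu, hgv⟩

theorem sqDen_map_equiv (μ : Measure α) (e : α ≃ᵐ β) (f : α → ℂ) :
    (sqDen μ f).map e = sqDen (μ.map e) (f ∘ e.symm) := by
  rw [sqDen, sqDen, ← Measure.withDensityᵥ_map_equiv]
  congr
  funext x
  simp

end SqDen

namespace CMSpace

variable {α : Type*} [MeasurableSpace α] (C : CMSpace α) (e : α ≃ᵐ α)

theorem map_add (u v : ComplexMeasure α) :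
    (C.add u v).map e = C.add (u.map e) (v.map e) := by
  obtain ⟨μ, hμ, f, g, hf, hg, rfl, rfl⟩ := exists_memLp_two_sqDen_eq_pair u v
  rw [C.add_repr μ inferInstance f g hf hg, sqDen_map_equiv, sqDen_map_equiv, sqDen_map_equiv,
    C.add_repr _ inferInstance _ _ (hf.comp_symm_map e) (hg.comp_symm_map e)]
  rfl

theorem map_smul (c : ℂ) (u : ComplexMeasure α) :
    (C.smul c u).map e = C.smul c (u.map e) := by
  obtain ⟨μ, hμ, f, -, hf, -, rfl, -⟩ := exists_memLp_two_sqDen_eq_pair u u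
  rw [C.smul_repr μ inferInstance c f hf, sqDen_map_equiv, sqDen_map_equiv,
    C.smul_repr _ inferInstance c _ (hf.comp_symm_map e)]
  rfl

theorem inner_map_map (u v : ComplexMeasure α) :
    C.inner (u.map e) (v.map e) = C.inner u v := by
  obtain ⟨μ, hμ, f, g, hf, hg, rfl, rfl⟩ := exists_memLp_two_sqDen_eq_pair u v
  rw [sqDen_map_equiv, sqDen_map_equiv,
    C.inner_repr _ inferInstance _ _ (hf.comp_symm_map e) (hg.comp_symm_map e),
    C.inner_repr μ inferInstance f g hf hg, integral_map_equiv]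
  simp

end CMSpace

/-- for each a ∈ ℝ^∞ the translation τ_a, (τ_a T)(E) = T{x | x+a ∈ E},
is a unitary operator on the Hilbert space CM(ℝ^∞): it is linear, bijective, and
preserves the inner product. -/
theorem cmTranslate_unitary (C : CMSpace (ℕ → ℝ)) (a : ℕ → ℝ) :
    (∀ (T : ComplexMeasure (ℕ → ℝ)) (E : Set (ℕ → ℝ)), MeasurableSet E →
        cmTranslate a T E = T {x | x + a ∈ E}) ∧
    Function.Bijective (cmTranslate a) ∧
    (∀ u v, cmTranslate a (C.add u v) = C.add (cmTranslate a u) (cmTranslate a v)) ∧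
    (∀ (c : ℂ) u, cmTranslate a (C.smul c u) = C.smul c (cmTranslate a u)) ∧
    (∀ u v, C.inner (cmTranslate a u) (cmTranslate a v) = C.inner u v) := by
  have hτ : cmTranslate a = fun T => T.map (MeasurableEquiv.addRight a) := rfl
  rw [hτ]
  exact ⟨fun T E hE => VectorMeasure.map_apply T (measurable_add_const a) hE,
    VectorMeasure.map_bijective _, C.map_add _, C.map_smul _, C.inner_map_map _⟩
end

section
/- For measurable spaces Ω₁, Ω₂ and complex measures u₁, v₁ on Ω₁ and u₂, v₂ on Ω₂, the product satisfies ⟨u₁·u₂, v₁·v₂⟩_{CM(Ω₁×Ω₂)} = ⟨u₁,v₁⟩_{CM(Ω₁)} · ⟨u₂,v₂⟩_{CM(Ω₂)}; in particular ‖u₁·u₂‖ = ‖u₁‖·‖u₂‖. -/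
/-! By `CMSpace.inner_repr`, the inner product of two measures in square-root-density form is the
`L²(μ)` inner product of their square-root densities. The square-root density of a product measure
is the tensor product `f₁ ⊗ f₂` with respect to `μ₁ × μ₂`, and Fubini splits the `L²` inner product
of tensor products (and their finiteness) into the product of the factors. -/

open MeasureTheory Complex Filter Topology

open scoped ENNReal

namespace MeasureTheory

variable {α β 𝕜 : Type*} [MeasurableSpace α] [MeasurableSpace β] [NormedRing 𝕜] [NormMulClass 𝕜]
  {μ : Measure α} {ν : Measure β} [SFinite ν] {f : α → 𝕜} {g : β → 𝕜} {p : ℝ≥0∞}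

theorem eLpNorm_prod_mul (hf : AEStronglyMeasurable f μ) (hg : AEStronglyMeasurable g ν)
    (hp_ne_top : p ≠ ∞) :
    eLpNorm (fun z : α × β => f z.1 * g z.2) p (μ.prod ν) = eLpNorm f p μ * eLpNorm g p ν := by
  rcases eq_or_ne p 0 with rfl | hp_ne_zero
  · simp
  have hp : 0 ≤ p.toReal := ENNReal.toReal_nonneg
  simp only [eLpNorm_eq_lintegral_rpow_enorm_toReal hp_ne_zero hp_ne_top, enorm_mul,
    ENNReal.mul_rpow_of_nonneg _ _ hp]
  rw [lintegral_prod_mul (hf.enorm.pow_const _) (hg.enorm.pow_const _),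
    ENNReal.mul_rpow_of_nonneg _ _ (by positivity)]

theorem MemLp.prod_mul (hf : MemLp f p μ) (hg : MemLp g p ν) (hp_ne_top : p ≠ ∞) :
    MemLp (fun z : α × β => f z.1 * g z.2) p (μ.prod ν) :=
  ⟨hf.1.comp_fst.mul hg.1.comp_snd, by
    rw [eLpNorm_prod_mul hf.1 hg.1 hp_ne_top]
    exact ENNReal.mul_lt_top hf.2 hg.2⟩

end MeasureTheory

namespace CMSpace

variable {Ω₁ Ω₂ : Type*} [MeasurableSpace Ω₁] [MeasurableSpace Ω₂]
  (C₁ : CMSpace Ω₁) (C₂ : CMSpace Ω₂) (C : CMSpace (Ω₁ × Ω₂))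
  {μ₁ : Measure Ω₁} {μ₂ : Measure Ω₂} [SigmaFinite μ₁] [SigmaFinite μ₂]
  {f₁ g₁ : Ω₁ → ℂ} {f₂ g₂ : Ω₂ → ℂ}

theorem inner_sqDen_prod_mul (hf₁ : MemLp f₁ 2 μ₁) (hg₁ : MemLp g₁ 2 μ₁)
    (hf₂ : MemLp f₂ 2 μ₂) (hg₂ : MemLp g₂ 2 μ₂) :
    C.inner (sqDen (μ₁.prod μ₂) (fun p => f₁ p.1 * f₂ p.2))
        (sqDen (μ₁.prod μ₂) (fun p => g₁ p.1 * g₂ p.2)) =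
      C₁.inner (sqDen μ₁ f₁) (sqDen μ₁ g₁) * C₂.inner (sqDen μ₂ f₂) (sqDen μ₂ g₂) := by
  rw [C.inner_repr _ inferInstance _ _ (hf₁.prod_mul hf₂ ENNReal.ofNat_ne_top)
      (hg₁.prod_mul hg₂ ENNReal.ofNat_ne_top),
    C₁.inner_repr μ₁ inferInstance _ _ hf₁ hg₁, C₂.inner_repr μ₂ inferInstance _ _ hf₂ hg₂,
    ← integral_prod_mul]
  congr with p
  rw [map_mul]
  ring

theorem nrm_sqDen_prod_mul (hf₁ : MemLp f₁ 2 μ₁) (hf₂ : MemLp f₂ 2 μ₂) :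
    C.nrm (sqDen (μ₁.prod μ₂) (fun p => f₁ p.1 * f₂ p.2)) =
      C₁.nrm (sqDen μ₁ f₁) * C₂.nrm (sqDen μ₂ f₂) := by
  obtain ⟨h₁_re, h₁_im⟩ := C₁.inner_self_nonneg (sqDen μ₁ f₁)
  obtain ⟨-, h₂_im⟩ := C₂.inner_self_nonneg (sqDen μ₂ f₂)
  rw [nrm, nrm, nrm, C₁.inner_sqDen_prod_mul C₂ C hf₁ hf₁ hf₂ hf₂, mul_re, h₁_im, h₂_im,
    mul_zero, sub_zero, Real.sqrt_mul h₁_re]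

end CMSpace

/-- ⟨u₁·u₂, v₁·v₂⟩_{CM(Ω₁×Ω₂)} = ⟨u₁,v₁⟩_{CM(Ω₁)}·⟨u₂,v₂⟩_{CM(Ω₂)} and
‖u₁·u₂‖ = ‖u₁‖·‖u₂‖, where arbitrary complex measures are written in square-root-density
form uᵢ = fᵢ|fᵢ|dμᵢ, vᵢ = gᵢ|gᵢ|dμᵢ with μᵢ finite, and the product complex measure is
(f₁|f₁|dμ₁)·(f₂|f₂|dμ₂) = (f₁f₂)|f₁f₂| d(μ₁×μ₂). -/
theorem inner_product_complex_measure_prod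
    {Ω₁ Ω₂ : Type*} [MeasurableSpace Ω₁] [MeasurableSpace Ω₂]
    (C₁ : CMSpace Ω₁) (C₂ : CMSpace Ω₂) (C : CMSpace (Ω₁ × Ω₂))
    (μ₁ : Measure Ω₁) (μ₂ : Measure Ω₂) [IsFiniteMeasure μ₁] [IsFiniteMeasure μ₂]
    (f₁ g₁ : Ω₁ → ℂ) (f₂ g₂ : Ω₂ → ℂ)
    (hf₁ : MemLp f₁ 2 μ₁) (hg₁ : MemLp g₁ 2 μ₁)
    (hf₂ : MemLp f₂ 2 μ₂) (hg₂ : MemLp g₂ 2 μ₂) :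
    C.inner (sqDen (μ₁.prod μ₂) (fun p => f₁ p.1 * f₂ p.2))
        (sqDen (μ₁.prod μ₂) (fun p => g₁ p.1 * g₂ p.2)) =
      C₁.inner (sqDen μ₁ f₁) (sqDen μ₁ g₁) * C₂.inner (sqDen μ₂ f₂) (sqDen μ₂ g₂) ∧
    C.nrm (sqDen (μ₁.prod μ₂) (fun p => f₁ p.1 * f₂ p.2)) =
      C₁.nrm (sqDen μ₁ f₁) * C₂.nrm (sqDen μ₂ f₂) :=
  ⟨C₁.inner_sqDen_prod_mul C₂ C hf₁ hg₁ hf₂ hg₂, C₁.nrm_sqDen_prod_mul C₂ C hf₁ hf₂⟩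
end
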